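/- If M is a Sidon set in F_2^t (t ≥ 2), then there exists a Sidon set in F_2^{t−1} of size (|M| + lin(M))/2. -/
import Mathlib


def IsSidon {G : Type*} [AddCommGroup G] (M : Set G) : Prop :=
  ∀ m₁ ∈ M, ∀ m₂ ∈ M, ∀ m₃ ∈ M, ∀ m₄ ∈ M,
    m₁ ≠ m₂ → m₁ ≠ m₃ → m₁ ≠ m₄ → m₂ ≠ m₃ → m₂ ≠ m₄ → m₃ ≠ m₄ →
      m₁ + m₂ + m₃ + m₄ ≠ 0

def dot {t : ℕ} (a b : Fin t → ZMod 2) : ZMod 2 := ∑ i, a i * b i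

noncomputable def walsh {t : ℕ} (M : Finset (Fin t → ZMod 2)) (a : Fin t → ZMod 2) : ℤ :=
  ∑ m ∈ M, (-1 : ℤ) ^ (dot a m).val

noncomputable def linM {t : ℕ} (M : Finset (Fin t → ZMod 2)) : ℕ :=
  Finset.sup (Finset.univ.filter (fun a : Fin t → ZMod 2 => a ≠ 0))
    (fun a => (walsh M a).natAbs)

lemma zmod2_ne_zero {x : ZMod 2} (h : x ≠ 0) : x = 1 := by revert h; revert x; decide

lemma zmod2_add_self (x : ZMod 2) : x + x = 0 := by revert x; decide

lemma zmod2_eq_of_add_eq_zero {u v : ZMod 2} (h : u + v = 0) : u = v := by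
  revert h; revert u v; decide

lemma pi_add_self {t : ℕ} (x : Fin t → ZMod 2) : x + x = 0 :=
  funext fun j => zmod2_add_self (x j)

lemma dot_add_right {t : ℕ} (a x y : Fin t → ZMod 2) :
    dot a (x + y) = dot a x + dot a y := by
  simp [dot, mul_add, Finset.sum_add_distrib]

theorem stmt_11 {t : ℕ} (ht : 2 ≤ t) (M : Finset (Fin t → ZMod 2))
    (hM : IsSidon (M : Set (Fin t → ZMod 2))) :
    ∃ N : Finset (Fin (t - 1) → ZMod 2), IsSidon (N : Set (Fin (t - 1) → ZMod 2)) ∧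
      2 * N.card = M.card + linM M := by
  obtain ⟨n, rfl⟩ : ∃ n, t = n + 1 := ⟨t - 1, (Nat.succ_pred_eq_of_pos (by omega)).symm⟩

  -- pick a nonzero a achieving the sup
  have hne : (Finset.univ.filter (fun a : Fin (n+1) → ZMod 2 => a ≠ 0)).Nonempty := by
    refine ⟨fun _ => 1, ?_⟩
    simp only [Finset.mem_filter, Finset.mem_univ, true_and]
    intro h
    exact one_ne_zero (congrFun h 0)
  obtain ⟨a, ha_mem, ha_sup⟩ :=
    Finset.exists_mem_eq_sup _ hne (fun a : Fin (n+1) → ZMod 2 => (walsh M a).natAbs)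
  have ha : a ≠ 0 := (Finset.mem_filter.mp ha_mem).2
  have hlin : linM M = (walsh M a).natAbs := ha_sup
  obtain ⟨i, hi0⟩ := Function.ne_iff.mp ha
  have hi : a i = 1 := zmod2_ne_zero hi0
  -- split M
  set P := M.filter (fun m => dot a m = 0) with hP
  set Q := M.filter (fun m => ¬ dot a m = 0) with hQ
  have hPQ : P.card + Q.card = M.card := Finset.card_filter_add_card_filter_not _
  have hw : walsh M a = (P.card : ℤ) - Q.card := by
    rw [walsh, ← Finset.sum_filter_add_sum_filter_not M (fun m => dot a m = 0)]
    have h1 : ∑ m ∈ P, ((-1 : ℤ)) ^ (dot a m).val = (P.card : ℤ) := by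
      have : ∀ m ∈ P, ((-1 : ℤ)) ^ (dot a m).val = 1 := by
        intro m hm
        rw [(Finset.mem_filter.mp hm).2]
        simp
      rw [Finset.sum_congr rfl this, Finset.sum_const, nsmul_eq_mul, mul_one]
    have h2 : ∑ m ∈ Q, ((-1 : ℤ)) ^ (dot a m).val = -(Q.card : ℤ) := by
      have : ∀ m ∈ Q, ((-1 : ℤ)) ^ (dot a m).val = -1 := by
        intro m hm
        rw [zmod2_ne_zero (Finset.mem_filter.mp hm).2]
        simp [ZMod.val_one]
      rw [Finset.sum_congr rfl this, Finset.sum_const, nsmul_eq_mul]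
      ring
    rw [h1, h2]
    ring
  -- key construction: from a Sidon subset of the hyperplane, get a Sidon set downstairs
  have key : ∀ S : Finset (Fin (n+1) → ZMod 2), (∀ x ∈ S, dot a x = 0) →
      IsSidon (S : Set (Fin (n+1) → ZMod 2)) →
      ∃ N : Finset (Fin n → ZMod 2), IsSidon (N : Set (Fin n → ZMod 2)) ∧ N.card = S.card := by
    intro S hSH hSsidon
    set φ : (Fin (n+1) → ZMod 2) → (Fin n → ZMod 2) := fun x k => x (i.succAbove k) with hφ
    have hdot : ∀ x : Fin (n+1) → ZMod 2,
        dot a x = x i + ∑ k : Fin n, a (i.succAbove k) * x (i.succAbove k) := by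
      intro x
      rw [dot, Fin.sum_univ_succAbove (fun j => a j * x j) i, hi, one_mul]
    -- injectivity of φ on the hyperplane
    have hinj : ∀ x, dot a x = 0 → ∀ y, dot a y = 0 → φ x = φ y → x = y := by
      intro x hx y hy hxy
      have hsum : ∑ k : Fin n, a (i.succAbove k) * x (i.succAbove k)
          = ∑ k : Fin n, a (i.succAbove k) * y (i.succAbove k) := by
        refine Finset.sum_congr rfl fun k _ => ?_
        have hk : x (i.succAbove k) = y (i.succAbove k) := by
          simpa only [hφ] using congrFun hxy k
        rw [hk]
      have hxi : x i = y i := by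
        have hx' : x i + ∑ k : Fin n, a (i.succAbove k) * x (i.succAbove k) = 0 :=
          (hdot x).symm.trans hx
        have hy' : y i + ∑ k : Fin n, a (i.succAbove k) * y (i.succAbove k) = 0 :=
          (hdot y).symm.trans hy
        rw [zmod2_eq_of_add_eq_zero hx', zmod2_eq_of_add_eq_zero hy', hsum]
      funext j
      rcases eq_or_ne j i with rfl | hj
      · exact hxi
      · obtain ⟨k, rfl⟩ := Fin.exists_succAbove_eq hj
        simpa only [hφ] using congrFun hxy k
    have hinjOn : Set.InjOn φ ↑S := fun x hx y hy h =>
      hinj x (hSH x hx) y (hSH y hy) h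
    refine ⟨S.image φ, ?_, Finset.card_image_of_injOn hinjOn⟩
    intro n₁ hn₁ n₂ hn₂ n₃ hn₃ n₄ hn₄ h12 h13 h14 h23 h24 h34
    simp only [Finset.coe_image, Set.mem_image, Finset.mem_coe] at hn₁ hn₂ hn₃ hn₄
    obtain ⟨s₁, hs₁, rfl⟩ := hn₁
    obtain ⟨s₂, hs₂, rfl⟩ := hn₂
    obtain ⟨s₃, hs₃, rfl⟩ := hn₃
    obtain ⟨s₄, hs₄, rfl⟩ := hn₄
    intro hcon
    have hsum0 : φ (s₁ + s₂ + s₃ + s₄) = 0 := by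
      funext k
      have := congrFun hcon k
      simp only [hφ, Pi.add_apply] at this ⊢
      simpa using this
    have hdots : dot a (s₁ + s₂ + s₃ + s₄) = 0 := by
      rw [dot_add_right, dot_add_right, dot_add_right,
        hSH _ hs₁, hSH _ hs₂, hSH _ hs₃, hSH _ hs₄]
      simp
    have : s₁ + s₂ + s₃ + s₄ = 0 :=
      hinj _ hdots 0 (by simp [dot]) (by rw [hsum0]; funext k; simp [hφ])
    exact hSsidon s₁ hs₁ s₂ hs₂ s₃ hs₃ s₄ hs₄
      (fun h => h12 (by rw [h])) (fun h => h13 (by rw [h])) (fun h => h14 (by rw [h]))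
      (fun h => h23 (by rw [h])) (fun h => h24 (by rw [h])) (fun h => h34 (by rw [h])) this
  -- now case on the sign of walsh
  rcases le_or_gt (Q.card : ℤ) (P.card : ℤ) with hcase | hcase
  · -- use P
    have hPsidon : IsSidon (P : Set (Fin (n+1) → ZMod 2)) := by
      intro m₁ h₁ m₂ h₂ m₃ h₃ m₄ h₄
      exact hM m₁ (Finset.mem_filter.mp h₁).1 m₂ (Finset.mem_filter.mp h₂).1
        m₃ (Finset.mem_filter.mp h₃).1 m₄ (Finset.mem_filter.mp h₄).1
    obtain ⟨N, hN, hNcard⟩ := key P (fun x hx => (Finset.mem_filter.mp hx).2) hPsidon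
    exact ⟨N, hN, by omega⟩
  · -- use a translate of Q
    have hQne : Q.Nonempty := by
      rw [← Finset.card_pos]; omega
    obtain ⟨q₀, hq₀⟩ := hQne
    have hq₀1 : dot a q₀ = 1 := zmod2_ne_zero (Finset.mem_filter.mp hq₀).2
    set S := Q.image (fun q => q + q₀) with hS
    have hScard : S.card = Q.card :=
      Finset.card_image_of_injOn (fun x _ y _ h => by
        have := congrArg (fun z => z + q₀) h
        simpa [add_assoc, pi_add_self] using this)
    have hSH : ∀ x ∈ S, dot a x = 0 := by
      intro x hx
      obtain ⟨q, hq, rfl⟩ := Finset.mem_image.mp hx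
      rw [dot_add_right, hq₀1, zmod2_ne_zero (Finset.mem_filter.mp hq).2]
      decide
    have hSsidon : IsSidon (S : Set (Fin (n+1) → ZMod 2)) := by
      intro m₁ h₁ m₂ h₂ m₃ h₃ m₄ h₄ h12 h13 h14 h23 h24 h34
      simp only [hS, Finset.coe_image, Set.mem_image, Finset.mem_coe] at h₁ h₂ h₃ h₄
      obtain ⟨q₁, hq₁, rfl⟩ := h₁
      obtain ⟨q₂, hq₂, rfl⟩ := h₂
      obtain ⟨q₃, hq₃, rfl⟩ := h₃
      obtain ⟨q₄, hq₄, rfl⟩ := h₄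
      have heq : (q₁ + q₀) + (q₂ + q₀) + (q₃ + q₀) + (q₄ + q₀) = q₁ + q₂ + q₃ + q₄ := by
        funext j
        simp only [Pi.add_apply]
        have h4 : (4 : ZMod 2) = 0 := by decide
        linear_combination (q₀ j) * h4
      rw [heq]
      exact hM q₁ (Finset.mem_filter.mp hq₁).1 q₂ (Finset.mem_filter.mp hq₂).1
        q₃ (Finset.mem_filter.mp hq₃).1 q₄ (Finset.mem_filter.mp hq₄).1
        (fun h => h12 (by rw [h])) (fun h => h13 (by rw [h])) (fun h => h14 (by rw [h]))
        (fun h => h23 (by rw [h])) (fun h => h24 (by rw [h])) (fun h => h34 (by rw [h]))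
    obtain ⟨N, hN, hNcard⟩ := key S hSH hSsidon
    refine ⟨N, hN, ?_⟩
    rw [hNcard, hScard]
    omega
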